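/- Let a ≤ x₀ ≤ b be real numbers, let f : [a,b] → ℝ be convex with f ≥ 0 on [a,b] and f(a) = 0, and let g : ℝ → ℝ be an affine function with g(b) = 0 and g(x₀) = f(x₀). Then for every Borel probability measure ν on ℝ supported on [a,b], ∫(f − g)² dν ≥ ν({a}) · ∫ f² dν. -/

import Mathlib

/-!
With c = ν{a} and A = g a, the identity
(1 - c)(x - y)² + c y² - c(1 - c)x² = ((1 - c)(x - y) - c y)²,
the bound |g| ≤ |A| on [a, b] and f a = 0 give, ν-a.e.,
A²(1_{a} - c) ≤ (1 - c)((f - g)² - c f²).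
The left side has ν-mean zero, so integrating yields (1 - c)(∫(f - g)² - c ∫f²) ≥ 0;
when c = 1, f vanishes ν-a.e. instead.
-/

open MeasureTheory Set

theorem mul_one_sub_mul_sq_le (c x y : ℝ) :
    c * (1 - c) * x ^ 2 ≤ (1 - c) * (x - y) ^ 2 + c * y ^ 2 := by
  nlinarith [sq_nonneg ((1 - c) * (x - y) - c * y)]

theorem abs_le_abs_left_of_affine_of_eq_zero_right {g : ℝ → ℝ} {p q a b : ℝ}
    (hg : ∀ y, g y = p * y + q) (hgb : g b = 0) {t : ℝ} (ht : t ∈ Icc a b) : |g t| ≤ |g a| := by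
  have hq : q = -(p * b) := by linarith [hg b]
  rw [hg, hg, hq, show p * t + -(p * b) = p * (t - b) by ring,
    show p * a + -(p * b) = p * (a - b) by ring, abs_mul, abs_mul]
  exact mul_le_mul_of_nonneg_left
    (abs_le_abs_of_nonpos (by linarith [ht.2]) (by linarith [ht.1])) (abs_nonneg p)

theorem aestronglyMeasurable_of_sq_of_ae_nonneg {α : Type*} [MeasurableSpace α] {μ : Measure α}
    {f : α → ℝ} (hf : AEStronglyMeasurable (fun t => f t ^ 2) μ) (hf0 : ∀ᵐ t ∂μ, 0 ≤ f t) :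
    AEStronglyMeasurable f μ :=
  (Real.continuous_sqrt.comp_aestronglyMeasurable hf).congr <|
    hf0.mono fun _ => Real.sqrt_sq

theorem integrable_sq_sub_of_abs_le {α : Type*} [MeasurableSpace α] {μ : Measure α}
    [IsFiniteMeasure μ] {F G : α → ℝ} (hF : AEStronglyMeasurable F μ)
    (hF2 : Integrable (fun t => F t ^ 2) μ) (hG : AEStronglyMeasurable G μ) {C : ℝ}
    (hGC : ∀ᵐ t ∂μ, |G t| ≤ C) : Integrable (fun t => (F t - G t) ^ 2) μ :=
  (((memLp_two_iff_integrable_sq hF).2 hF2).sub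
    ((memLp_top_of_bound hG C hGC).mono_exponent le_top)).integrable_sq

theorem measureReal_singleton_mul_integral_sq_le {α : Type*} [MeasurableSpace α]
    [MeasurableSingletonClass α] {ν : Measure α} [IsProbabilityMeasure ν] {F G : α → ℝ} {a : α}
    (hFa : F a = 0) (hG : ∀ᵐ t ∂ν, |G t| ≤ |G a|) (hF : Integrable (fun t => F t ^ 2) ν)
    (hFG : Integrable (fun t => (F t - G t) ^ 2) ν) :
    ν.real {a} * ∫ t, F t ^ 2 ∂ν ≤ ∫ t, (F t - G t) ^ 2 ∂ν := by
  set c := ν.real {a} with hc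
  rcases (measureReal_le_one : c ≤ 1).lt_or_eq with hc1 | hc1
  · have hpointwise : ∀ᵐ t ∂ν, ({a} : Set α).indicator (fun _ => G a ^ 2) t - c * G a ^ 2 ≤
        (1 - c) * ((F t - G t) ^ 2 - c * F t ^ 2) := by
      filter_upwards [hG] with t ht
      by_cases hta : t = a
      · subst hta
        rw [indicator_of_mem (mem_singleton t), hFa]
        exact le_of_eq (by ring)
      · rw [indicator_of_notMem (mem_singleton_iff.not.2 hta)]
        have := mul_le_mul_of_nonneg_left (sq_le_sq.2 ht) (measureReal_nonneg : 0 ≤ c)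
        nlinarith [mul_one_sub_mul_sq_le c (F t) (G t)]
    have hind : Integrable (({a} : Set α).indicator fun _ => G a ^ 2) ν :=
      (integrable_const _).indicator (measurableSet_singleton a)
    have hmono := integral_mono_ae (hind.sub (integrable_const (c * G a ^ 2)))
      ((hFG.sub (hF.const_mul c)).const_mul (1 - c)) hpointwise
    simp only [Pi.sub_apply] at hmono
    rw [integral_sub hind (integrable_const _),
      integral_indicator_const _ (measurableSet_singleton a), integral_const, integral_const_mul,
      integral_sub hFG (hF.const_mul c), integral_const_mul] at hmono
    simp only [probReal_univ, smul_eq_mul, one_mul, ← hc, sub_self] at hmono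
    exact sub_nonneg.1 (nonneg_of_mul_nonneg_right hmono (sub_pos.2 hc1))
  · have hνa : ∀ᵐ t ∂ν, t = a := by
      refine ae_iff.2 (?_ : ν {a}ᶜ = 0)
      rw [← measureReal_eq_zero_iff, measureReal_compl (measurableSet_singleton a), hc1]
      simp
    rw [integral_eq_zero_of_ae (hνa.mono fun t ht => by simp [ht, hFa]), mul_zero]
    exact integral_nonneg fun t => sq_nonneg _

theorem step3_linear_case_general
    (a b : ℝ)
    (f : ℝ → ℝ)
    (hf0 : ∀ t ∈ Icc a b, 0 ≤ f t) (hfa : f a = 0)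
    (g : ℝ → ℝ) (hg : ∃ p q : ℝ, ∀ y, g y = p * y + q)
    (hgb : g b = 0)
    (ν : Measure ℝ) [IsProbabilityMeasure ν]
    (hν : ν (Icc a b)ᶜ = 0) :
    (ν {a}).toReal * ∫ t, (f t) ^ 2 ∂ν ≤ ∫ t, (f t - g t) ^ 2 ∂ν := by
  obtain ⟨p, q, hpq⟩ := hg
  have hsupp : ∀ᵐ t ∂ν, t ∈ Icc a b := mem_ae_iff.2 hν
  have hgle : ∀ᵐ t ∂ν, |g t| ≤ |g a| :=
    hsupp.mono fun _ => abs_le_abs_left_of_affine_of_eq_zero_right hpq hgb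
  by_cases hfi : Integrable (fun t => f t ^ 2) ν
  · have hfm : AEStronglyMeasurable f ν :=
      aestronglyMeasurable_of_sq_of_ae_nonneg hfi.1 (hsupp.mono hf0)
    have hgm : AEStronglyMeasurable g ν := by
      rw [show g = fun y => p * y + q from funext hpq]
      fun_prop
    exact measureReal_singleton_mul_integral_sq_le hfa hgle hfi
      (integrable_sq_sub_of_abs_le hfm hfi hgm hgle)
  · rw [integral_undef hfi, mul_zero]
    exact integral_nonneg fun t => sq_nonneg _

/-- Step 3 of the proof of the local-to-global lemma. -/
theorem step3_linear_case
    (a x₀ b : ℝ) (hax : a ≤ x₀) (hxb : x₀ ≤ b)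
    (f : ℝ → ℝ) (hf : ConvexOn ℝ (Icc a b) f)
    (hf0 : ∀ t ∈ Icc a b, 0 ≤ f t) (hfa : f a = 0)
    (g : ℝ → ℝ) (hg : ∃ p q : ℝ, ∀ y, g y = p * y + q)
    (hgb : g b = 0) (hgx : g x₀ = f x₀)
    (ν : Measure ℝ) [IsProbabilityMeasure ν]
    (hν : ν (Icc a b)ᶜ = 0) :
    (ν {a}).toReal * ∫ t, (f t) ^ 2 ∂ν ≤ ∫ t, (f t - g t) ^ 2 ∂ν :=
  step3_linear_case_general a b f hf0 hfa g hg hgb ν hν
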